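/- Let f₁(y) = 1 on [0,1] and f₂(y) = 1 + aδ φ_Y((y-1/2)/δ) where φ_Y is the hat function, a > 0, aδ ≤ 1/2, and δ > 0 is small enough that the perturbation is supported in [0,1]. Then the squared Hellinger distance satisfies H²(F₁‖F₂) = 2(1 - ∫_0^1 √(f₂(y)) dy) ≤ (2√2/3) a² δ³. -/

import Mathlib

open Set

noncomputable def phiY (t : ℝ) : ℝ :=
  if t ∈ Set.Icc (-1:ℝ) 0 then t + 1
  else if t ∈ Set.Icc (0:ℝ) 2 then -t + 1
  else if t ∈ Set.Icc (2:ℝ) 3 then t - 3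
  else 0

/-!
Write `f₂ = 1 + g` with `g y = a δ φ_Y((y - 1/2)/δ)`. Since `∫ f₂ = 1`, expanding the square
gives the Hellinger identity. For the bound, `|g| ≤ a δ ≤ 1/2` and the second-order lower bound
`√(1 + u) ≥ 1 + u/2 - (√2/4) u²` on `|u| ≤ 1/2` give `1 - ∫ √f₂ ≤ (√2/4) ∫ g²`, the first-order
term vanishing because `∫ φ_Y = 0`. Rescaling `t = (y - 1/2)/δ` turns `∫ g²` into
`(a δ)² δ ∫ φ_Y² = (4/3) a² δ³`.
-/

open Function MeasureTheory intervalIntegral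

lemma phiY_eq_max_sub_max (t : ℝ) : phiY t = max 0 (1 - |t|) - max 0 (1 - |t - 2|) := by
  unfold phiY
  grind

lemma continuous_phiY : Continuous phiY := by
  rw [funext phiY_eq_max_sub_max]
  fun_prop

lemma abs_phiY_le_one (t : ℝ) : |phiY t| ≤ 1 := by
  rw [phiY_eq_max_sub_max]
  grind

lemma support_phiY_subset : support phiY ⊆ Ioc (-1) 3 := by
  intro t ht
  rw [mem_support, phiY_eq_max_sub_max] at ht
  grind

lemma integral_comp_phiY {G : ℝ → ℝ} (hG : Continuous G) :
    ∫ t in (-1:ℝ)..3, G (phiY t) =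
      (∫ t in (-1:ℝ)..0, G (t + 1)) + (∫ t in (0:ℝ)..2, G (1 - t)) +
        ∫ t in (2:ℝ)..3, G (t - 3) := by
  have hint (u v : ℝ) : IntervalIntegrable (fun t => G (phiY t)) volume u v :=
    (hG.comp continuous_phiY).intervalIntegrable u v
  rw [← integral_add_adjacent_intervals (hint (-1) 0) (hint 0 3),
    ← integral_add_adjacent_intervals (hint 0 2) (hint 2 3), ← add_assoc]
  refine congrArg₂ (· + ·) (congrArg₂ (· + ·) ?_ ?_) ?_ <;>
    refine integral_congr fun t ht => congrArg G ?_ <;>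
    rw [uIcc_of_le (by norm_num), mem_Icc] at ht <;>
    unfold phiY <;> grind

lemma integral_phiY : ∫ t in (-1:ℝ)..3, phiY t = 0 := by
  refine (integral_comp_phiY continuous_id).trans ?_
  norm_num [integral_comp_sub_left (fun x => x)]

lemma integral_phiY_sq : ∫ t in (-1:ℝ)..3, phiY t ^ 2 = 4 / 3 := by
  rw [integral_comp_phiY (G := (· ^ 2)) (continuous_pow 2)]
  norm_num [integral_comp_add_right (fun x => x ^ 2), integral_comp_sub_left (fun x => x ^ 2),
    integral_comp_sub_right (fun x => x ^ 2)]

section Rescaling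

variable {E : Type*} [NormedAddCommGroup E] [NormedSpace ℝ E]

lemma integral_eq_of_support_subset_Ioc {μ : Measure ℝ} {f : ℝ → E} {a b c d : ℝ}
    (hf : support f ⊆ Ioc c d) (hac : a ≤ c) (hdb : d ≤ b) :
    ∫ t in a..b, f t ∂μ = ∫ t in c..d, f t ∂μ := by
  rw [integral_eq_integral_of_support_subset hf,
    integral_eq_integral_of_support_subset (hf.trans (Ioc_subset_Ioc hac hdb))]

lemma integral_comp_sub_div_of_support_subset {f : ℝ → E} {a b x₀ δ c d : ℝ} (hδ : 0 < δ)
    (hf : support f ⊆ Ioc c d) (hc : (a - x₀) / δ ≤ c) (hd : d ≤ (b - x₀) / δ) :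
    ∫ y in a..b, f ((y - x₀) / δ) = δ • ∫ t in c..d, f t := by
  rw [integral_comp_sub_right (fun x => f (x / δ)), integral_comp_div f hδ.ne',
    integral_eq_of_support_subset_Ioc hf hc hd]

end Rescaling

lemma integral_comp_sub_half_div {F : ℝ → ℝ} {δ : ℝ} (hδ : 0 < δ) (hδ' : δ ≤ 1 / 6)
    (hF : support F ⊆ Ioc (-1) 3) :
    ∫ y in (0:ℝ)..1, F ((y - 1/2) / δ) = δ * ∫ t in (-1:ℝ)..3, F t :=
  integral_comp_sub_div_of_support_subset hδ hF
    (by rw [div_le_iff₀ hδ]; linarith) (by rw [le_div_iff₀ hδ]; linarith)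

lemma integral_phiY_rescaled {δ : ℝ} (hδ : 0 < δ) (hδ' : δ ≤ 1 / 6) :
    ∫ y in (0:ℝ)..1, phiY ((y - 1/2) / δ) = 0 := by
  rw [integral_comp_sub_half_div hδ hδ' support_phiY_subset, integral_phiY, mul_zero]

lemma integral_phiY_rescaled_sq {δ : ℝ} (hδ : 0 < δ) (hδ' : δ ≤ 1 / 6) :
    ∫ y in (0:ℝ)..1, phiY ((y - 1/2) / δ) ^ 2 = 4 / 3 * δ := by
  have hsupp : support (phiY · ^ 2) ⊆ Ioc (-1) 3 := by
    rw [support_pow _ two_ne_zero]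
    exact support_phiY_subset
  rw [integral_comp_sub_half_div (F := (phiY · ^ 2)) hδ hδ' hsupp, integral_phiY_sq, mul_comm]

lemma one_add_div_two_sub_le_sqrt_one_add {u : ℝ} (hu : |u| ≤ 1 / 2) :
    1 + u / 2 - √2 / 4 * u ^ 2 ≤ √(1 + u) := by
  obtain ⟨hu₁, hu₂⟩ := abs_le.mp hu
  set s := √(1 + u)
  have hs_sq : s ^ 2 = 1 + u := Real.sq_sqrt (by linarith)
  have hs : 1 / 2 ≤ s := by nlinarith [Real.sqrt_nonneg (1 + u)]
  have hr : 1 ≤ √2 := Real.one_le_sqrt.mpr (by norm_num)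
  -- With `u = s² - 1` the claim reads `(s - 1)² / 2 ≤ (√2/4) (s - 1)² (s + 1)²`.
  have key : 1 / 2 ≤ √2 / 4 * (s + 1) ^ 2 := by nlinarith
  nlinarith [mul_le_mul_of_nonneg_left key (sq_nonneg (s - 1))]

lemma integral_one_sub_sqrt_sq {f : ℝ → ℝ} (hf : IntervalIntegrable f volume 0 1)
    (hf_sqrt : IntervalIntegrable (fun y => √(f y)) volume 0 1)
    (hf_nonneg : ∀ y ∈ Icc (0:ℝ) 1, 0 ≤ f y) (hf_one : ∫ y in (0:ℝ)..1, f y = 1) :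
    ∫ y in (0:ℝ)..1, (1 - √(f y)) ^ 2 = 2 * (1 - ∫ y in (0:ℝ)..1, √(f y)) := by
  have hexpand : EqOn (fun y => (1 - √(f y)) ^ 2)
      (fun y => 1 - 2 * √(f y) + f y) (uIcc 0 1) := fun y hy => by
    rw [uIcc_of_le zero_le_one] at hy
    dsimp only
    rw [sub_sq, Real.sq_sqrt (hf_nonneg y hy)]
    ring
  rw [integral_congr hexpand,
    integral_add (intervalIntegrable_const.sub (hf_sqrt.const_mul 2)) hf,
    integral_sub intervalIntegrable_const (hf_sqrt.const_mul 2),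
    intervalIntegral.integral_const_mul, hf_one]
  simp only [intervalIntegral.integral_const, sub_zero, smul_eq_mul, mul_one]
  ring

lemma one_sub_integral_sqrt_one_add_le {g : ℝ → ℝ} (hg : IntervalIntegrable g volume 0 1)
    (hg_sq : IntervalIntegrable (fun y => g y ^ 2) volume 0 1)
    (hg_sqrt : IntervalIntegrable (fun y => √(1 + g y)) volume 0 1)
    (hg_le : ∀ y ∈ Icc (0:ℝ) 1, |g y| ≤ 1 / 2) (hg_mean : ∫ y in (0:ℝ)..1, g y = 0) :
    1 - ∫ y in (0:ℝ)..1, √(1 + g y) ≤ √2 / 4 * ∫ y in (0:ℝ)..1, g y ^ 2 := by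
  have hlower_int : IntervalIntegrable (fun y => 1 + g y / 2 - √2 / 4 * g y ^ 2)
      volume 0 1 :=
    (intervalIntegrable_const.add (hg.div_const 2)).sub (hg_sq.const_mul _)
  have hmono := integral_mono_on zero_le_one hlower_int hg_sqrt
    fun y hy => one_add_div_two_sub_le_sqrt_one_add (hg_le y hy)
  have hlower : ∫ y in (0:ℝ)..1, (1 + g y / 2 - √2 / 4 * g y ^ 2)
      = 1 - √2 / 4 * ∫ y in (0:ℝ)..1, g y ^ 2 := by
    rw [integral_sub (intervalIntegrable_const.add (hg.div_const 2)) (hg_sq.const_mul _),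
      integral_add intervalIntegrable_const (hg.div_const 2), intervalIntegral.integral_div,
      intervalIntegral.integral_const_mul, hg_mean]
    simp
  linarith

theorem stmt7 (a δ : ℝ) (ha : 0 < a) (haδ : a * δ ≤ 1/2)
    (hδ : δ ∈ Ioc (0:ℝ) (1/8))
    (f₂ : ℝ → ℝ) (hf₂ : ∀ y, f₂ y = 1 + a * δ * phiY ((y - 1/2) / δ)) :
    (∫ y in (0:ℝ)..1, (1 - Real.sqrt (f₂ y)) ^ 2)
      = 2 * (1 - ∫ y in (0:ℝ)..1, Real.sqrt (f₂ y)) ∧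
    2 * (1 - ∫ y in (0:ℝ)..1, Real.sqrt (f₂ y))
      ≤ (2 * Real.sqrt 2 / 3) * a ^ 2 * δ ^ 3 := by
  obtain ⟨hδ₀, hδ₈⟩ := hδ
  set g : ℝ → ℝ := fun y => a * δ * phiY ((y - 1/2) / δ) with hg
  obtain rfl : f₂ = fun y => 1 + g y := funext hf₂
  have hg_cont : Continuous g := continuous_const.mul (continuous_phiY.comp (by fun_prop))
  have hg_le (y : ℝ) : |g y| ≤ 1 / 2 := by
    rw [hg, abs_mul, abs_of_pos (mul_pos ha hδ₀)]
    nlinarith [abs_phiY_le_one ((y - 1/2) / δ), abs_nonneg (phiY ((y - 1/2) / δ))]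
  have hδ₆ : δ ≤ 1 / 6 := by linarith
  have hg_mean : ∫ y in (0:ℝ)..1, g y = 0 := by
    rw [hg, intervalIntegral.integral_const_mul, integral_phiY_rescaled hδ₀ hδ₆, mul_zero]
  have hg_sq : ∫ y in (0:ℝ)..1, g y ^ 2 = (a * δ) ^ 2 * (4 / 3 * δ) := by
    simp only [hg, mul_pow, intervalIntegral.integral_const_mul]
    rw [integral_phiY_rescaled_sq hδ₀ hδ₆]
  have hsqrt_int : IntervalIntegrable (fun y => √(1 + g y)) volume 0 1 :=
    (continuous_const.add hg_cont).sqrt.intervalIntegrable 0 1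
  refine ⟨integral_one_sub_sqrt_sq ((continuous_const.add hg_cont).intervalIntegrable 0 1)
    hsqrt_int (fun y _ => by linarith [abs_le.mp (hg_le y)]) ?_, ?_⟩
  · rw [integral_add intervalIntegrable_const (hg_cont.intervalIntegrable 0 1), hg_mean]
    simp
  · have hbound := one_sub_integral_sqrt_one_add_le (hg_cont.intervalIntegrable 0 1)
      ((hg_cont.pow 2).intervalIntegrable 0 1) hsqrt_int (fun y _ => hg_le y) hg_mean
    rw [hg_sq] at hbound
    linear_combination 2 * hbound
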